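/- arXiv:1906.05914 — 2 statements merged into one kernel-verified Lean document; each statement's English description precedes it below -/
import Mathlib

section
/- Let α > 0. Then ∫₀^∞ 8(1+α)²·s^(2α+3)/(1+s^(2(1+α)))² · (1 - s^(2(1+α)))/(1 + s^(2(1+α))) ds = -4π/((1+α)·sin(π/(1+α))). -/
/-!
Substituting `t = s ^ c / (1 + s ^ c)` with `c = 2 (1 + α)` maps `(0, ∞)` onto `(0, 1)`, and
`t / (1 - t) = s ^ c` turns the integral into `4 (1 + α) ∫₀¹ t ^ β (1 - t) ^ (-β) (1 - 2 t) dt`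
with `β = 1 / (1 + α)`. This last integral is `B(1 + β, 1 - β) - 2 B(2 + β, 1 - β)`
`= -β ^ 2 Γ(β) Γ(1 - β)`, and Euler's reflection formula `Γ(β) Γ(1 - β) = π / sin (π β)` finishes.
-/

open Real MeasureTheory Set

lemma ofReal_rpow_mul_one_sub_rpow {u v x : ℝ} (hx : x ∈ Icc (0 : ℝ) 1) :
    ((x ^ (u - 1) * (1 - x) ^ (v - 1) : ℝ) : ℂ) =
      (x : ℂ) ^ ((u : ℂ) - 1) * (1 - (x : ℂ)) ^ ((v : ℂ) - 1) := by
  push_cast [Complex.ofReal_cpow hx.1, Complex.ofReal_cpow (sub_nonneg.2 hx.2)]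
  rfl

lemma integrableOn_rpow_mul_one_sub_rpow {u v : ℝ} (hu : 0 < u) (hv : 0 < v) :
    IntegrableOn (fun x : ℝ => x ^ (u - 1) * (1 - x) ^ (v - 1)) (Ioo 0 1) := by
  have hc : IntegrableOn
      (fun x : ℝ => ((x : ℂ) ^ ((u : ℂ) - 1) * (1 - (x : ℂ)) ^ ((v : ℂ) - 1)).re) (Ioc 0 1) :=
    (Complex.betaIntegral_convergent (by simpa using hu) (by simpa using hv)).1.re
  refine (hc.mono_set Ioo_subset_Ioc_self).congr_fun (fun x hx => ?_) measurableSet_Ioo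
  dsimp only
  rw [← ofReal_rpow_mul_one_sub_rpow (Ioo_subset_Icc_self hx), Complex.ofReal_re]

lemma integral_Ioo_rpow_mul_one_sub_rpow {u v : ℝ} (hu : 0 < u) (hv : 0 < v) :
    ∫ x in Ioo 0 1, x ^ (u - 1) * (1 - x) ^ (v - 1) = ProbabilityTheory.beta u v := by
  have hB : Complex.betaIntegral u v =
      ((∫ x in Ioo 0 1, x ^ (u - 1) * (1 - x) ^ (v - 1) : ℝ) : ℂ) := by
    rw [Complex.betaIntegral, intervalIntegral.integral_of_le zero_le_one,
      integral_Ioc_eq_integral_Ioo]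
    refine Eq.trans (setIntegral_congr_fun measurableSet_Ioo fun x hx => ?_) integral_ofReal
    exact (ofReal_rpow_mul_one_sub_rpow (Ioo_subset_Icc_self hx)).symm
  rw [ProbabilityTheory.beta_eq_betaIntegralReal u v hu hv, hB, Complex.ofReal_re]

lemma integral_Ioo_rpow_mul_one_sub_rpow_neg_mul_one_sub_two_mul {β : ℝ} (h0 : 0 < β)
    (h1 : β < 1) :
    ∫ t in Ioo 0 1, t ^ β * (1 - t) ^ (-β) * (1 - 2 * t) = -β ^ 2 * (π / sin (π * β)) := by
  have hu₁ : 0 < 1 + β := by linarith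
  have hu₂ : 0 < 2 + β := by linarith
  have hv : 0 < 1 - β := by linarith
  have hsplit : ∀ t ∈ Ioo (0 : ℝ) 1, t ^ β * (1 - t) ^ (-β) * (1 - 2 * t) =
      t ^ (1 + β - 1) * (1 - t) ^ (1 - β - 1) - 2 * (t ^ (2 + β - 1) * (1 - t) ^ (1 - β - 1)) := by
    intro t ht
    rw [show 2 + β - 1 = 1 + β by ring, rpow_add ht.1, rpow_one]
    ring_nf
  have hΓ₁ : Gamma (1 + β) = β * Gamma β := by rw [add_comm, Gamma_add_one h0.ne']
  have hΓ₂ : Gamma (2 + β) = (1 + β) * (β * Gamma β) := by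
    rw [show 2 + β = (1 + β) + 1 by ring, Gamma_add_one hu₁.ne', hΓ₁]
  have hΓ₃ : Gamma 3 = 2 := by
    rw [show (3 : ℝ) = 2 + 1 by norm_num, Gamma_add_one two_ne_zero, Gamma_two, mul_one]
  rw [setIntegral_congr_fun measurableSet_Ioo hsplit,
    integral_sub (integrableOn_rpow_mul_one_sub_rpow hu₁ hv)
      ((integrableOn_rpow_mul_one_sub_rpow hu₂ hv).const_mul 2),
    integral_const_mul, integral_Ioo_rpow_mul_one_sub_rpow hu₁ hv,
    integral_Ioo_rpow_mul_one_sub_rpow hu₂ hv, ProbabilityTheory.beta, ProbabilityTheory.beta,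
    show 1 + β + (1 - β) = 2 by ring, show 2 + β + (1 - β) = 3 by ring, hΓ₁, hΓ₂, hΓ₃, Gamma_two,
    ← Gamma_mul_Gamma_one_sub β]
  ring

section
variable {c : ℝ}

lemma hasDerivAt_rpow_div_one_add_rpow {x : ℝ} (hx : 0 < x) :
    HasDerivAt (fun y : ℝ => y ^ c / (1 + y ^ c)) (c * x ^ (c - 1) / (1 + x ^ c) ^ 2) x := by
  have hpow : HasDerivAt (fun y : ℝ => y ^ c) (c * x ^ (c - 1)) x :=
    hasDerivAt_rpow_const (Or.inl hx.ne')
  have hden : 1 + x ^ c ≠ 0 := by positivity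
  exact (hpow.div (hpow.const_add 1) hden).congr_deriv (by field_simp; ring)

lemma strictMonoOn_rpow_div_one_add_rpow (hc : 0 < c) :
    StrictMonoOn (fun x : ℝ => x ^ c / (1 + x ^ c)) (Ioi 0) := by
  intro x (hx : 0 < x) y (hy : 0 < y) hxy
  have hpow : x ^ c < y ^ c := rpow_lt_rpow (le_of_lt hx) hxy hc
  have : 0 < x ^ c := rpow_pos_of_pos hx c
  dsimp only
  rw [div_lt_div_iff₀ (by positivity) (by positivity)]
  linarith

lemma image_rpow_div_one_add_rpow_Ioi (hc : 0 < c) :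
    (fun x : ℝ => x ^ c / (1 + x ^ c)) '' Ioi 0 = Ioo 0 1 := by
  refine subset_antisymm ?_ fun t ht => ?_
  · rintro _ ⟨x, hx, rfl⟩
    have : 0 < x ^ c := rpow_pos_of_pos hx c
    exact ⟨by positivity, (div_lt_one (by positivity)).2 (by linarith)⟩
  · have hq : 0 < t / (1 - t) := div_pos ht.1 (by linarith [ht.2])
    refine ⟨(t / (1 - t)) ^ c⁻¹, rpow_pos_of_pos hq _, ?_⟩
    have : 1 - t ≠ 0 := by linarith [ht.2]
    simp only [rpow_inv_rpow hq.le hc.ne']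
    field_simp
    ring

theorem integral_Ioo_zero_one_eq_integral_Ioi_rpow_div_one_add_rpow (hc : 0 < c) (g : ℝ → ℝ) :
    ∫ t in Ioo 0 1, g t =
      ∫ x in Ioi 0, c * x ^ (c - 1) / (1 + x ^ c) ^ 2 * g (x ^ c / (1 + x ^ c)) := by
  rw [← image_rpow_div_one_add_rpow_Ioi hc, integral_image_eq_integral_abs_deriv_smul
    measurableSet_Ioi (fun x hx => (hasDerivAt_rpow_div_one_add_rpow hx).hasDerivWithinAt)
    (strictMonoOn_rpow_div_one_add_rpow hc).injOn]
  refine setIntegral_congr_fun measurableSet_Ioi fun x (hx : 0 < x) => ?_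
  rw [smul_eq_mul, abs_of_pos (by positivity)]

lemma rpow_div_one_add_rpow_rpow_mul_one_sub_rpow_neg {x : ℝ} (hx : 0 < x) (β : ℝ) :
    (x ^ c / (1 + x ^ c)) ^ β * (1 - x ^ c / (1 + x ^ c)) ^ (-β) = x ^ (c * β) := by
  have hxc : 0 < x ^ c := rpow_pos_of_pos hx c
  have hsub : 1 - x ^ c / (1 + x ^ c) = (1 + x ^ c)⁻¹ := by field_simp; ring
  rw [hsub, inv_rpow (by positivity), ← rpow_neg (by positivity), neg_neg,
    div_rpow hxc.le (by positivity), ← rpow_mul hx.le, div_mul_cancel₀ _ (by positivity)]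

end

theorem stmt_3 (α : ℝ) (hα : 0 < α) :
    ∫ s in Set.Ioi (0 : ℝ),
        8 * (1 + α) ^ 2 * s ^ (2 * α + 3) / (1 + s ^ (2 * (1 + α))) ^ 2 *
          ((1 - s ^ (2 * (1 + α))) / (1 + s ^ (2 * (1 + α)))) =
      -(4 * Real.pi) / ((1 + α) * Real.sin (Real.pi / (1 + α))) := by
  have h1α : 0 < 1 + α := by linarith
  set β := (1 + α)⁻¹ with hβ
  have hβ₀ : 0 < β := inv_pos.2 h1α
  have hβ₁ : β < 1 := inv_lt_one_of_one_lt₀ (by linarith)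
  have hsin : 0 < sin (π * β) := sin_pos_of_pos_of_lt_pi (by positivity) (by nlinarith [pi_pos])
  calc _ = ∫ t in Ioo 0 1, 4 * (1 + α) * (t ^ β * (1 - t) ^ (-β) * (1 - 2 * t)) := by
        rw [integral_Ioo_zero_one_eq_integral_Ioi_rpow_div_one_add_rpow (c := 2 * (1 + α))
          (by positivity)]
        refine setIntegral_congr_fun measurableSet_Ioi fun s (hs : 0 < s) => ?_
        rw [rpow_div_one_add_rpow_rpow_mul_one_sub_rpow_neg hs]
        have hexp : s ^ (2 * α + 3) = s ^ (2 * (1 + α) - 1) * s ^ (2 : ℝ) := by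
          rw [← rpow_add hs]; ring_nf
        rw [show 2 * (1 + α) * β = 2 by rw [hβ]; field_simp, hexp]
        field_simp
        ring
    _ = 4 * (1 + α) * (-β ^ 2 * (π / sin (π * β))) := by
        rw [integral_const_mul, integral_Ioo_rpow_mul_one_sub_rpow_neg_mul_one_sub_two_mul hβ₀ hβ₁]
    _ = _ := by
        rw [hβ, ← div_eq_mul_inv]
        field_simp
end

section
/- Let α > -1, l ≥ 1 an integer, and set δ = l/(1+α). Then the functions ξ₁(r) = ((δ+1)·r^l + (δ-1)·r^(2(1+α)+l))/(1 + r^(2(1+α))) and ξ₂(r) = ((δ+1)·r^(2(1+α)-l) + (δ-1)·r^(-l))/(1 + r^(2(1+α))) both satisfy, for all r > 0, the ODE ξ''(r) + ξ'(r)/r + (8(1+α)²·r^(2α)/(1+r^(2(1+α)))² - l²/r²)·ξ(r) = 0. -/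
/-!
Direct computation. With `c = 2(1+α)`, the mode `ξ₁` is a quotient of a sum of two powers of `r`
by `1 + r^c`, so the second-order quotient rule gives `ξ₁''`, and after writing
`r^{2α} = r^c / r²` the equation becomes a rational identity in `r`, `r^l` and `r^c`. It holds for
every real `l`; since `ξ₂` is `-ξ₁` with `l` replaced by `-l` and the equation only sees `l²`, the
mode `ξ₂` comes for free.
-/

open Real Filter Topology

theorem deriv_deriv_div {N D N' D' : ℝ → ℝ} {N'' D'' r : ℝ}
    (hN : ∀ᶠ x in 𝓝 r, HasDerivAt N (N' x) x) (hD : ∀ᶠ x in 𝓝 r, HasDerivAt D (D' x) x)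
    (hD0 : ∀ᶠ x in 𝓝 r, D x ≠ 0) (hN' : HasDerivAt N' N'' r) (hD' : HasDerivAt D' D'' r) :
    deriv (deriv (N / D)) r =
      (N'' * D r - N r * D'') / D r ^ 2 - 2 * D' r * (N' r * D r - N r * D' r) / D r ^ 3 := by
  have hfirst : deriv (N / D) =ᶠ[𝓝 r] (N' * D - N * D') / D ^ 2 := by
    filter_upwards [hN, hD, hD0] with x hNx hDx hD0x
    exact (hNx.div hDx hD0x).deriv
  have hDr := hD.self_of_nhds
  have hsecond := ((hN'.mul hDr).sub (hN.self_of_nhds.mul hD')).div (hDr.pow 2)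
    (pow_ne_zero 2 hD0.self_of_nhds)
  rw [hfirst.deriv_eq, hsecond.deriv]
  simp only [Pi.sub_apply, Pi.mul_apply, Pi.pow_apply]
  field_simp [hD0.self_of_nhds]
  ring

-- `ξ₁` and `ξ₂` of the paper, for a real index `l`.
noncomputable def liouvilleMode (α l r : ℝ) : ℝ :=
  ((l / (1 + α) + 1) * r ^ l + (l / (1 + α) - 1) * r ^ (2 * (1 + α) + l)) / (1 + r ^ (2 * (1 + α)))

noncomputable def liouvilleModeDual (α l r : ℝ) : ℝ :=
  ((l / (1 + α) + 1) * r ^ (2 * (1 + α) - l) + (l / (1 + α) - 1) * r ^ (-l)) /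
    (1 + r ^ (2 * (1 + α)))

noncomputable def linearizedLiouville (α l : ℝ) (ξ : ℝ → ℝ) (r : ℝ) : ℝ :=
  deriv (deriv ξ) r + deriv ξ r / r +
    (8 * (1 + α) ^ 2 * r ^ (2 * α) / (1 + r ^ (2 * (1 + α))) ^ 2 - l ^ 2 / r ^ 2) * ξ r

theorem neg_liouvilleMode_neg (α l : ℝ) : -liouvilleMode α (-l) = liouvilleModeDual α l := by
  funext r
  simp only [Pi.neg_apply, liouvilleMode, liouvilleModeDual, ← sub_eq_add_neg]
  ring

theorem linearizedLiouville_neg (α l : ℝ) (ξ : ℝ → ℝ) (r : ℝ) :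
    linearizedLiouville α l (-ξ) r = -linearizedLiouville α l ξ r := by
  have hneg : ∀ f : ℝ → ℝ, deriv (-f) = -deriv f := fun f => funext fun _ => deriv.neg
  simp only [linearizedLiouville, hneg, Pi.neg_apply]
  ring

theorem linearizedLiouville_neg_index (α l : ℝ) :
    linearizedLiouville α (-l) = linearizedLiouville α l := by
  funext ξ r
  simp only [linearizedLiouville, neg_sq]

theorem hasDerivAt_const_mul_rpow (a p : ℝ) {x : ℝ} (hx : 0 < x) :
    HasDerivAt (fun y => a * y ^ p) (a * (p * x ^ (p - 1))) x :=
  (hasDerivAt_rpow_const (Or.inl hx.ne')).const_mul a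

theorem linearizedLiouville_liouvilleMode {α : ℝ} (hα : 1 + α ≠ 0) (l : ℝ) {r : ℝ} (hr : 0 < r) :
    linearizedLiouville α l (liouvilleMode α l) r = 0 := by
  set δ := l / (1 + α)
  set c := 2 * (1 + α)
  have hN : ∀ x, 0 < x → HasDerivAt (fun y => (δ + 1) * y ^ l + (δ - 1) * y ^ (c + l))
      ((δ + 1) * (l * x ^ (l - 1)) + (δ - 1) * ((c + l) * x ^ (c + l - 1))) x := fun x hx =>
    (hasDerivAt_const_mul_rpow _ _ hx).add (hasDerivAt_const_mul_rpow _ _ hx)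
  have hN' : HasDerivAt
      (fun x => (δ + 1) * (l * x ^ (l - 1)) + (δ - 1) * ((c + l) * x ^ (c + l - 1)))
      ((δ + 1) * (l * ((l - 1) * r ^ (l - 1 - 1))) +
        (δ - 1) * ((c + l) * ((c + l - 1) * r ^ (c + l - 1 - 1)))) r :=
    ((hasDerivAt_const_mul_rpow _ _ hr).const_mul _).add
      ((hasDerivAt_const_mul_rpow _ _ hr).const_mul _)
  have hD : ∀ x, 0 < x → HasDerivAt (fun y => 1 + y ^ c) (c * x ^ (c - 1)) x := fun x hx =>
    (hasDerivAt_rpow_const (Or.inl hx.ne')).const_add 1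
  have hD' : HasDerivAt (fun x => c * x ^ (c - 1)) (c * ((c - 1) * r ^ (c - 1 - 1))) r :=
    hasDerivAt_const_mul_rpow _ _ hr
  have hpos : ∀ᶠ x in 𝓝 r, 0 < x := Ioi_mem_nhds hr
  have hD0 : ∀ x : ℝ, 0 < x → 1 + x ^ c ≠ 0 := fun x hx => by positivity
  have hξ : liouvilleMode α l =
      (fun y => (δ + 1) * y ^ l + (δ - 1) * y ^ (c + l)) / fun y => 1 + y ^ c := rfl
  have h1 : deriv (liouvilleMode α l) r = _ := ((hN r hr).div (hD r hr) (hD0 r hr)).deriv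
  have h2 := deriv_deriv_div (hpos.mono hN) (hpos.mono hD) (hpos.mono hD0) hN' hD'
  rw [linearizedLiouville, h1, hξ, h2, Pi.div_apply]
  have h2α : r ^ (2 * α) = r ^ c / r ^ 2 := by
    rw [← rpow_natCast, ← rpow_sub hr]; congr 1; simp only [c, Nat.cast_ofNat]; ring
  have hU := hD0 r hr
  simp only [rpow_sub hr, rpow_add hr, rpow_one, h2α]
  generalize r ^ l = X
  generalize r ^ c = U at hU ⊢
  simp only [δ, c]
  field_simp
  ring

theorem linearizedLiouville_liouvilleModeDual {α : ℝ} (hα : 1 + α ≠ 0) (l : ℝ) {r : ℝ}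
    (hr : 0 < r) : linearizedLiouville α l (liouvilleModeDual α l) r = 0 := by
  rw [← neg_liouvilleMode_neg, linearizedLiouville_neg, ← linearizedLiouville_neg_index,
    linearizedLiouville_liouvilleMode hα _ hr, neg_zero]

theorem stmt_9_general (α : ℝ) (hα : -1 < α) (l : ℕ) :
    ∀ r : ℝ, 0 < r →
      (deriv (deriv (fun r : ℝ =>
          (((l : ℝ) / (1 + α) + 1) * r ^ (l : ℝ) +
            ((l : ℝ) / (1 + α) - 1) * r ^ (2 * (1 + α) + l)) /
          (1 + r ^ (2 * (1 + α))))) r +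
        deriv (fun r : ℝ =>
          (((l : ℝ) / (1 + α) + 1) * r ^ (l : ℝ) +
            ((l : ℝ) / (1 + α) - 1) * r ^ (2 * (1 + α) + l)) /
          (1 + r ^ (2 * (1 + α)))) r / r +
        (8 * (1 + α) ^ 2 * r ^ (2 * α) / (1 + r ^ (2 * (1 + α))) ^ 2 -
          (l : ℝ) ^ 2 / r ^ 2) *
          ((((l : ℝ) / (1 + α) + 1) * r ^ (l : ℝ) +
            ((l : ℝ) / (1 + α) - 1) * r ^ (2 * (1 + α) + l)) /
          (1 + r ^ (2 * (1 + α)))) = 0) ∧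
      (deriv (deriv (fun r : ℝ =>
          (((l : ℝ) / (1 + α) + 1) * r ^ (2 * (1 + α) - l) +
            ((l : ℝ) / (1 + α) - 1) * r ^ (-(l : ℝ))) /
          (1 + r ^ (2 * (1 + α))))) r +
        deriv (fun r : ℝ =>
          (((l : ℝ) / (1 + α) + 1) * r ^ (2 * (1 + α) - l) +
            ((l : ℝ) / (1 + α) - 1) * r ^ (-(l : ℝ))) /
          (1 + r ^ (2 * (1 + α)))) r / r +
        (8 * (1 + α) ^ 2 * r ^ (2 * α) / (1 + r ^ (2 * (1 + α))) ^ 2 -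
          (l : ℝ) ^ 2 / r ^ 2) *
          ((((l : ℝ) / (1 + α) + 1) * r ^ (2 * (1 + α) - l) +
            ((l : ℝ) / (1 + α) - 1) * r ^ (-(l : ℝ))) /
          (1 + r ^ (2 * (1 + α)))) = 0) := by
  intro r hr
  have hα' : 1 + α ≠ 0 := by linarith
  exact ⟨linearizedLiouville_liouvilleMode hα' l hr, linearizedLiouville_liouvilleModeDual hα' l hr⟩

theorem stmt_9 (α : ℝ) (hα : -1 < α) (l : ℕ) (hl : 1 ≤ l) :
    ∀ r : ℝ, 0 < r →
      (deriv (deriv (fun r : ℝ =>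
          (((l : ℝ) / (1 + α) + 1) * r ^ (l : ℝ) +
            ((l : ℝ) / (1 + α) - 1) * r ^ (2 * (1 + α) + l)) /
          (1 + r ^ (2 * (1 + α))))) r +
        deriv (fun r : ℝ =>
          (((l : ℝ) / (1 + α) + 1) * r ^ (l : ℝ) +
            ((l : ℝ) / (1 + α) - 1) * r ^ (2 * (1 + α) + l)) /
          (1 + r ^ (2 * (1 + α)))) r / r +
        (8 * (1 + α) ^ 2 * r ^ (2 * α) / (1 + r ^ (2 * (1 + α))) ^ 2 -
          (l : ℝ) ^ 2 / r ^ 2) *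
          ((((l : ℝ) / (1 + α) + 1) * r ^ (l : ℝ) +
            ((l : ℝ) / (1 + α) - 1) * r ^ (2 * (1 + α) + l)) /
          (1 + r ^ (2 * (1 + α)))) = 0) ∧
      (deriv (deriv (fun r : ℝ =>
          (((l : ℝ) / (1 + α) + 1) * r ^ (2 * (1 + α) - l) +
            ((l : ℝ) / (1 + α) - 1) * r ^ (-(l : ℝ))) /
          (1 + r ^ (2 * (1 + α))))) r +
        deriv (fun r : ℝ =>
          (((l : ℝ) / (1 + α) + 1) * r ^ (2 * (1 + α) - l) +
            ((l : ℝ) / (1 + α) - 1) * r ^ (-(l : ℝ))) /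
          (1 + r ^ (2 * (1 + α)))) r / r +
        (8 * (1 + α) ^ 2 * r ^ (2 * α) / (1 + r ^ (2 * (1 + α))) ^ 2 -
          (l : ℝ) ^ 2 / r ^ 2) *
          ((((l : ℝ) / (1 + α) + 1) * r ^ (2 * (1 + α) - l) +
            ((l : ℝ) / (1 + α) - 1) * r ^ (-(l : ℝ))) /
          (1 + r ^ (2 * (1 + α)))) = 0) :=
  stmt_9_general α hα l
end
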